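/- Let (A,B,R,σ) be a normalized context over a multi-adjoint frame whose conjunctors (of all frames) have no zero-divisors, and let (g,f) = (χ_X, χ_Y) ∈ FC with g^↑ ≠ f_⊥ and f^↓ ≠ g_⊥. Then ⟨f^↓, f⟩ ⪯ ⟨g, g^↑⟩ in the concept lattice, i.e. f^↓ ⪯2 g. -/

import Mathlib

/-- An adjoint triple with respect to posets `P1`, `P2`, `P3`:
`x ≤ sdiv z y ↔ conj x y ≤ z ↔ y ≤ nwar z x`. -/
def IsAdjointTriple {P1 P2 P3 : Type*} [PartialOrder P1] [PartialOrder P2] [PartialOrder P3]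
    (conj : P1 → P2 → P3) (sdiv : P3 → P2 → P1) (nwar : P3 → P1 → P2) : Prop :=
  ∀ (x : P1) (y : P2) (z : P3),
    (x ≤ sdiv z y ↔ conj x y ≤ z) ∧ (conj x y ≤ z ↔ y ≤ nwar z x)

/-- An operator between lower-bounded posets has no zero-divisors. -/
def NoZD {Q1 Q2 Q3 : Type*} [Bot Q1] [Bot Q2] [Bot Q3] (conj : Q1 → Q2 → Q3) : Prop :=
  ∀ x y, conj x y = ⊥ → x = ⊥ ∨ y = ⊥

/-- Characteristic function of a set, valued in `{⊥, ⊤}`. -/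
noncomputable def chi {α L : Type*} [Top L] [Bot L] (X : Set α) (a : α) : L := by
  classical exact if a ∈ X then ⊤ else ⊥

/-- Necessity operator `↑N : L2^B → L1^A` of the object-oriented frame. -/
def upN {A B L1 L2 P ιo : Type*} [CompleteLattice L1]
    (R : A → B → P) (sdivO : ιo → L2 → P → L1) (σo : A → B → ιo) (g : B → L2) : A → L1 :=
  fun a => ⨅ b, sdivO (σo a b) (g b) (R a b)

/-- Necessity operator `↓N : L1^A → L2^B` of the property-oriented frame. -/
def downN {A B L1 L2 P ιp : Type*} [CompleteLattice L2]
    (R : A → B → P) (nwarP : ιp → L1 → P → L2) (σp : A → B → ιp) (f : A → L1) : B → L2 :=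
  fun b => ⨅ a, nwarP (σp a b) (f a) (R a b)

/-- Concept-forming operator `↑ : L2^B → L1^A`. -/
def upOp {A B L1 L2 P ι : Type*} [CompleteLattice L1]
    (R : A → B → P) (sdiv : ι → P → L2 → L1) (σ : A → B → ι) (g : B → L2) : A → L1 :=
  fun a => ⨅ b, sdiv (σ a b) (R a b) (g b)

/-- Concept-forming operator `↓ : L1^A → L2^B`. -/
def downOp {A B L1 L2 P ι : Type*} [CompleteLattice L2]
    (R : A → B → P) (nwar : ι → P → L1 → L2) (σ : A → B → ι) (f : A → L1) : B → L2 :=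
  fun b => ⨅ a, nwar (σ a b) (R a b) (f a)

/-- `(χ_X, χ_Y)` belongs to the set `FC`, i.e. `∅ ≠ X ⊊ B`, `∅ ≠ Y ⊊ A`, and
`(χ_X, χ_Y) ∈ F_N` (that is, `(χ_X)^{↑N} = χ_Y` and `(χ_Y)^{↓N} = χ_X`). -/
def MemFC {A B L1 L2 P ιp ιo : Type*} [CompleteLattice L1] [CompleteLattice L2]
    (R : A → B → P) (sdivO : ιo → L2 → P → L1) (σo : A → B → ιo)
    (nwarP : ιp → L1 → P → L2) (σp : A → B → ιp)
    (X : Set B) (Y : Set A) : Prop :=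
  X ≠ ∅ ∧ X ≠ Set.univ ∧ Y ≠ ∅ ∧ Y ≠ Set.univ ∧
  upN R sdivO σo (chi X) = (chi Y : A → L1) ∧
  downN R nwarP σp (chi Y) = (chi X : B → L2)

/-- A context is normalized if every row and every column of `R` contains both a
`⊥` value and a non-`⊥` value. -/
def Normalized {A B P : Type*} [Bot P] (R : A → B → P) : Prop :=
  (∀ a, (∃ b, R a b ≠ ⊥) ∧ (∃ b, R a b = ⊥)) ∧
  (∀ b, (∃ a, R a b ≠ ⊥) ∧ (∃ a, R a b = ⊥))

/-!
For `b ∉ X` pick `a ∈ Y`. Then `⊤ = χ_Y(a) = (χ_X)^{↑N}(a) ≤ ⊥ ↙_o R(a,b)`, i.e. `⊤ &_o R(a,b) = ⊥`,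
so `R(a,b) = ⊥` as `&_o` has no zero-divisors. Consequently
`f^↓(b) ≤ R(a,b) ↖ χ_Y(a) = ⊥ ↖ ⊤`, and `⊤ & (⊥ ↖ ⊤) ≤ ⊥` forces `⊥ ↖ ⊤ = ⊥`, again by the absence
of zero-divisors. Both cancellations need `⊤ ≠ ⊥` in `L1`, which `g^↑ ≠ f_⊥` provides.
-/

theorem NoZD.eq_bot_of_le_bot {Q1 Q2 Q3 : Type*} [Bot Q1] [Bot Q2] [PartialOrder Q3] [OrderBot Q3]
    {conj : Q1 → Q2 → Q3} (hconj : NoZD conj) {x : Q1} {y : Q2} (hx : x ≠ ⊥)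
    (hxy : conj x y ≤ ⊥) : y = ⊥ :=
  (hconj x y (le_bot_iff.mp hxy)).resolve_left hx

namespace IsAdjointTriple

variable {P1 P2 P3 : Type*} [PartialOrder P1] [PartialOrder P2] [PartialOrder P3]
  [OrderBot P2] [OrderBot P3] [Bot P1]
  {conj : P1 → P2 → P3} {sdiv : P3 → P2 → P1} {nwar : P3 → P1 → P2}

theorem eq_bot_of_le_sdiv_bot (hadj : IsAdjointTriple conj sdiv nwar) (hconj : NoZD conj)
    {x : P1} {y : P2} (hx : x ≠ ⊥) (h : x ≤ sdiv ⊥ y) : y = ⊥ :=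
  hconj.eq_bot_of_le_bot hx ((hadj x y ⊥).1.mp h)

theorem nwar_bot_eq_bot (hadj : IsAdjointTriple conj sdiv nwar) (hconj : NoZD conj)
    {x : P1} (hx : x ≠ ⊥) : nwar ⊥ x = ⊥ :=
  hconj.eq_bot_of_le_bot hx ((hadj x _ ⊥).2.mpr le_rfl)

end IsAdjointTriple

section Chi

variable {α L : Type*} [Top L] [Bot L] {X : Set α} {a : α}

theorem chi_of_mem (ha : a ∈ X) : (chi X a : L) = ⊤ := by
  simp [chi, ha]

theorem chi_of_notMem (ha : a ∉ X) : (chi X a : L) = ⊥ := by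
  simp [chi, ha]

end Chi

theorem eq_bot_of_upN_chi_eq {A B L1 L2 P ιo : Type*} [CompleteLattice L1] [CompleteLattice L2]
    [PartialOrder P] [OrderBot P]
    {conjO : ιo → L1 → P → L2} {sdivO : ιo → L2 → P → L1} {nwarO : ιo → L2 → L1 → P}
    (hadj : ∀ k, IsAdjointTriple (conjO k) (sdivO k) (nwarO k)) (hconj : ∀ k, NoZD (conjO k))
    (hL1 : (⊤ : L1) ≠ ⊥) {R : A → B → P} {σo : A → B → ιo} {X : Set B} {Y : Set A}
    (hXY : upN R sdivO σo (chi X) = (chi Y : A → L1)) {a : A} {b : B} (ha : a ∈ Y) (hb : b ∉ X) :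
    R a b = ⊥ := by
  have htop : (⊤ : L1) ≤ sdivO (σo a b) ⊥ (R a b) := by
    rw [← chi_of_mem ha, ← congrFun hXY a, ← chi_of_notMem (L := L2) hb]
    exact iInf_le (fun b' => sdivO (σo a b') (chi X b') (R a b')) b
  exact (hadj _).eq_bot_of_le_sdiv_bot (hconj _) hL1 htop

theorem downOp_eq_bot_of_eq_bot {A B L1 L2 P ι : Type*} [CompleteLattice L1] [CompleteLattice L2]
    [PartialOrder P] [OrderBot P]
    {conj : ι → L1 → L2 → P} {sdiv : ι → P → L2 → L1} {nwar : ι → P → L1 → L2}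
    (hadj : ∀ i, IsAdjointTriple (conj i) (sdiv i) (nwar i)) (hconj : ∀ i, NoZD (conj i))
    {R : A → B → P} {σ : A → B → ι} {f : A → L1} {a : A} {b : B}
    (hf : f a ≠ ⊥) (hR : R a b = ⊥) : downOp R nwar σ f b = ⊥ := by
  refine le_bot_iff.mp ((iInf_le (fun a' => nwar (σ a' b) (R a' b) (f a')) a).trans_eq ?_)
  rw [hR]
  exact (hadj _).nwar_bot_eq_bot (hconj _) hf

theorem FC_pair_concept_interval_general
    {A B : Type*}
    {L1 L2 P : Type*} [CompleteLattice L1] [CompleteLattice L2]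
    [PartialOrder P] [BoundedOrder P]
    {ι ιp ιo : Type*}
    (conj : ι → L1 → L2 → P) (sdiv : ι → P → L2 → L1) (nwar : ι → P → L1 → L2)
    (hMA : ∀ i, IsAdjointTriple (conj i) (sdiv i) (nwar i))
    (hMAnzd : ∀ i, NoZD (conj i))
    (nwarP : ιp → L1 → P → L2)
    (conjO : ιo → L1 → P → L2) (sdivO : ιo → L2 → P → L1) (nwarO : ιo → L2 → L1 → P)
    (hOO : ∀ k, IsAdjointTriple (conjO k) (sdivO k) (nwarO k))
    (hOOnzd : ∀ k, NoZD (conjO k))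
    (R : A → B → P) (σ : A → B → ι) (σp : A → B → ιp) (σo : A → B → ιo)
    (X : Set B) (Y : Set A)
    (hXY : MemFC (L1 := L1) (L2 := L2) R sdivO σo nwarP σp X Y)
    (hup : upOp R sdiv σ (chi X) ≠ (fun _ : A => (⊥ : L1))) :
    downOp R nwar σ (chi Y) ≤ (chi X : B → L2) := by
  have hL1 : (⊤ : L1) ≠ ⊥ := by
    obtain ⟨a, ha⟩ := Function.ne_iff.mp hup
    exact ne_bot_of_le_ne_bot ha le_top
  intro b
  by_cases hb : b ∈ X
  · exact le_top.trans_eq (chi_of_mem hb).symm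
  obtain ⟨a, ha⟩ := Set.nonempty_iff_ne_empty.mpr hXY.2.2.1
  have hR : R a b = ⊥ := eq_bot_of_upN_chi_eq hOO hOOnzd hL1 hXY.2.2.2.2.1 ha hb
  have hYa : (chi Y a : L1) ≠ ⊥ := by rwa [chi_of_mem ha]
  exact (downOp_eq_bot_of_eq_bot hMA hMAnzd hYa hR).trans_le bot_le

/-- For `(g, f) = (χ_X, χ_Y) ∈ FC` with `g^↑ ≠ f_⊥` and `f^↓ ≠ g_⊥`, the inequality
`⟨f^↓, f⟩ ⪯ ⟨g, g^↑⟩` holds, i.e. `f^↓ ⪯₂ g`. -/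
theorem FC_pair_concept_interval
    {A B : Type*} [Nonempty A] [Nonempty B]
    {L1 L2 P : Type*} [CompleteLattice L1] [CompleteLattice L2]
    [PartialOrder P] [BoundedOrder P]
    {ι ιp ιo : Type*}
    (conj : ι → L1 → L2 → P) (sdiv : ι → P → L2 → L1) (nwar : ι → P → L1 → L2)
    (hMA : ∀ i, IsAdjointTriple (conj i) (sdiv i) (nwar i))
    (hMAnzd : ∀ i, NoZD (conj i))
    (conjP : ιp → P → L2 → L1) (sdivP : ιp → L1 → L2 → P) (nwarP : ιp → L1 → P → L2)
    (hPO : ∀ j, IsAdjointTriple (conjP j) (sdivP j) (nwarP j))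
    (hPOnzd : ∀ j, NoZD (conjP j))
    (conjO : ιo → L1 → P → L2) (sdivO : ιo → L2 → P → L1) (nwarO : ιo → L2 → L1 → P)
    (hOO : ∀ k, IsAdjointTriple (conjO k) (sdivO k) (nwarO k))
    (hOOnzd : ∀ k, NoZD (conjO k))
    (R : A → B → P) (σ : A → B → ι) (σp : A → B → ιp) (σo : A → B → ιo)
    (hnorm : Normalized R)
    (X : Set B) (Y : Set A)
    (hXY : MemFC (L1 := L1) (L2 := L2) R sdivO σo nwarP σp X Y)
    (hup : upOp R sdiv σ (chi X) ≠ (fun _ : A => (⊥ : L1)))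
    (hdown : downOp R nwar σ (chi Y) ≠ (fun _ : B => (⊥ : L2))) :
    downOp R nwar σ (chi Y) ≤ (chi X : B → L2) :=
  FC_pair_concept_interval_general conj sdiv nwar hMA hMAnzd nwarP conjO sdivO nwarO hOO hOOnzd R σ
    σp σo X Y hXY hup
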